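/- arXiv:1807.00214 — 3 statements merged into one kernel-verified Lean document; each statement's English description precedes it below -/
import Mathlib

section
/- Let γ ∈ [1,2] and suppose f ∈ L^1(ℝ^d) with ∫ f = 0 and ∫ |y||f(y)| dy < ∞. Then for all r > 0, ‖T_r^E f‖_{L^γ}^γ ≤ C ‖f‖_{L^1}^{γ−1} ∫_{ℝ^d} r^q |r^{−E} y| |f(y)| dy, where C depends only on B (via the Lipschitz constant of its covariogram). -/
open MeasureTheory

/-- For a real `d×d` matrix `E` and `r > 0`, `r^E := exp((log r) • E)`. -/
noncomputable def matPow {d : ℕ} (E : Matrix (Fin d) (Fin d) ℝ) (r : ℝ) :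
    Matrix (Fin d) (Fin d) ℝ :=
  NormedSpace.exp ((Real.log r) • E)

/-- The scaled and shifted set `B_E(x,r) = x + r^E B`. -/
noncomputable def ballE {d : ℕ} (E : Matrix (Fin d) (Fin d) ℝ)
    (B : Set (EuclideanSpace ℝ (Fin d))) (x : EuclideanSpace ℝ (Fin d)) (r : ℝ) :
    Set (EuclideanSpace ℝ (Fin d)) :=
  (fun y => x + Matrix.toEuclideanLin (matPow E r) y) '' B

/-- Kernel operator `T_r^E f (x) = ∫_{B_E(x,r)} f`. -/
noncomputable def TE {d : ℕ} (E : Matrix (Fin d) (Fin d) ℝ)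
    (B : Set (EuclideanSpace ℝ (Fin d))) (r : ℝ)
    (f : EuclideanSpace ℝ (Fin d) → ℝ) (x : EuclideanSpace ℝ (Fin d)) : ℝ :=
  ∫ y in ballE E B x r, f y

/-!
Since `∫ f = 0`, `T_r^E f (x) = ∫ (1[y ∈ x + r^E B] - 1[0 ∈ x + r^E B]) f(y) dy`. Hence
`|T_r^E f| ≤ ‖f‖₁`, and by Tonelli `‖T_r^E f‖₁ ≤ ∫ |f(y)| Leb(r^E B Δ (-y + r^E B)) dy`. Changing
variables by `r^E`, whose determinant is `exp (trace (log r • E)) = r^q`, this volume is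
`r^q Leb(B Δ (z + B)) ≤ C r^q |r^{-E} y|` with `z = -r^{-E} y`. Finally
`‖g‖_γ^γ ≤ ‖g‖_∞^{γ-1} ‖g‖₁`.
-/

open NormedSpace Polynomial
open scoped Pointwise symmDiff

namespace Matrix
variable {n : Type*} [Fintype n] [DecidableEq n]

theorem hasDerivAt_det_one_add_smul (A : Matrix n n ℝ) :
    HasDerivAt (fun s : ℝ => (1 + s • A).det) A.trace 0 := by
  have h := (det (1 + (X : ℝ[X]) • A.map C)).hasDerivAt 0
  rw [derivative_det_one_add_X_smul] at h
  have heval : ∀ s : ℝ, (det (1 + (X : ℝ[X]) • A.map C)).eval s = (1 + s • A).det := fun s => by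
    rw [eval_det]
    congr 1
    ext i j
    by_cases hij : i = j <;> simp [hij, mul_comm]
  simpa only [heval] using h

theorem hasDerivAt_det_exp_smul_zero (A : Matrix n n ℝ) :
    HasDerivAt (fun s : ℝ => (exp (s • A)).det) A.trace 0 := by
  let : NormedRing (Matrix n n ℝ) := Matrix.linftyOpNormedRing
  let : NormedAlgebra ℝ (Matrix n n ℝ) := Matrix.linftyOpNormedAlgebra
  have hdet : DifferentiableAt ℝ (det : Matrix n n ℝ → ℝ) 1 := by
    rw [show (det : Matrix n n ℝ → ℝ) = _ from _root_.funext det_apply]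
    fun_prop
  -- `s ↦ exp (s • A)` and `s ↦ 1 + s • A` agree to first order at `0`.
  have hexp := hdet.hasFDerivAt.comp_hasDerivAt_of_eq 0
    (hasDerivAt_exp_smul_const' (𝕂 := ℝ) A 0) (by simp)
  have hline := hdet.hasFDerivAt.comp_hasDerivAt_of_eq 0
    (((hasDerivAt_id (0 : ℝ)).smul_const A).const_add 1) (by simp)
  simp only [zero_smul, exp_zero, mul_one, one_smul, id] at hexp hline
  rw [(hasDerivAt_det_one_add_smul A).unique hline]
  exact hexp

theorem hasDerivAt_det_exp_smul (A : Matrix n n ℝ) (t : ℝ) :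
    HasDerivAt (fun s : ℝ => (exp (s • A)).det) (A.trace * (exp (t • A)).det) t := by
  have hshift : (fun s : ℝ => (exp (s • A)).det) =
      fun s => (exp (t • A)).det * (exp ((s - t) • A)).det := by
    ext s
    rw [← det_mul, ← exp_add_of_commute _ _ ((Commute.refl A).smul_left _ |>.smul_right _),
      ← add_smul, add_sub_cancel]
  rw [hshift, mul_comm]
  exact (HasDerivAt.comp_sub_const t t
    (by rw [sub_self]; exact hasDerivAt_det_exp_smul_zero A)).const_mul _

theorem det_exp (A : Matrix n n ℝ) : (exp A).det = Real.exp A.trace := by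
  have hconst : ∀ t : ℝ,
      HasDerivAt (fun s : ℝ => Real.exp (-(A.trace * s)) * (exp (s • A)).det) 0 t := by
    intro t
    have hdamp : HasDerivAt (fun s : ℝ => Real.exp (-(A.trace * s)))
        (Real.exp (-(A.trace * t)) * -A.trace) t := by
      simpa using ((hasDerivAt_id t).const_mul A.trace).neg.exp
    exact (hdamp.mul (hasDerivAt_det_exp_smul A t)).congr_deriv (by ring)
  have h := is_const_of_deriv_eq_zero (fun t => (hconst t).differentiableAt)
    (fun t => (hconst t).deriv) 1 0
  simp only [mul_one, one_smul, mul_zero, neg_zero, Real.exp_zero, zero_smul, exp_zero, det_one,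
    Real.exp_neg] at h
  field_simp at h
  exact h

end Matrix

theorem enorm_setIntegral_le_of_integral_eq_zero {α E : Type*} [MeasurableSpace α]
    {μ : Measure α} [NormedAddCommGroup E] [NormedSpace ℝ E] {f : α → E} (hf : Integrable f μ)
    (hf0 : ∫ y, f y ∂μ = 0) {s : Set α} (hs : MeasurableSet s) (y₀ : α) :
    ‖∫ y in s, f y ∂μ‖ₑ ≤ ∫⁻ y in {y | ¬(y ∈ s ↔ y₀ ∈ s)}, ‖f y‖ₑ ∂μ := by
  by_cases hy₀ : y₀ ∈ s
  · have hcompl : ∫ y in s, f y ∂μ = -∫ y in sᶜ, f y ∂μ :=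
      eq_neg_of_add_eq_zero_left ((integral_add_compl hs hf).trans hf0)
    simp only [hy₀, iff_true]
    rw [hcompl, enorm_neg]
    exact enorm_integral_le_lintegral_enorm _
  · simp only [hy₀, iff_false, not_not, Set.ofPred_mem_eq]
    exact enorm_integral_le_lintegral_enorm _

section Translates
variable {G : Type*} [AddCommGroup G] [MeasurableSpace G] [MeasurableAdd₂ G] [MeasurableNeg G]
  {μ : Measure G}

theorem lintegral_enorm_setIntegral_add_image_le [SFinite μ] [μ.IsNegInvariant] {E : Type*}
    [NormedAddCommGroup E] [NormedSpace ℝ E] {f : G → E}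
    (hf : Integrable f μ) (hf0 : ∫ y, f y ∂μ = 0) {K : Set G} (hK : MeasurableSet K) :
    ∫⁻ x, ‖∫ y in (x + ·) '' K, f y ∂μ‖ₑ ∂μ ≤ ∫⁻ y, ‖f y‖ₑ * μ (K ∆ ((-y + ·) '' K)) ∂μ := by
  set U := {p : G × G | ¬(-p.1 + p.2 ∈ K ↔ -p.1 ∈ K)}
  have hU : MeasurableSet U :=
    ((measurable_fst.neg.add measurable_snd) hK).iff (measurable_fst.neg hK) |>.compl
  have hUx : ∀ x, {y | ¬(y ∈ (x + ·) '' K ↔ 0 ∈ (x + ·) '' K)} = Prod.mk x ⁻¹' U := by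
    intro x; ext y; simp [U]
  have hUy : ∀ y, (·, y) ⁻¹' U = -(K ∆ ((-y + ·) '' K)) := by
    intro y; ext x
    simp only [U, Set.mem_symmDiff, Set.mem_neg, Set.image_add_left, Set.mem_preimage,
      Set.mem_ofPred_eq, neg_neg, add_comm (-x) y]
    tauto
  calc ∫⁻ x, ‖∫ y in (x + ·) '' K, f y ∂μ‖ₑ ∂μ
      ≤ ∫⁻ x, ∫⁻ y, (Prod.mk x ⁻¹' U).indicator (‖f ·‖ₑ) y ∂μ ∂μ := by
        refine lintegral_mono fun x => ?_
        rw [lintegral_indicator (measurable_prodMk_left hU), ← hUx]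
        refine enorm_setIntegral_le_of_integral_eq_zero hf hf0 ?_ 0
        simpa only [Set.image_add_left] using measurable_const_add (-x) hK
    _ = ∫⁻ y, ∫⁻ x, ((·, y) ⁻¹' U).indicator (fun _ => ‖f y‖ₑ) x ∂μ ∂μ :=
        lintegral_lintegral_swap ((hf.1.comp_snd.enorm).indicator hU)
    _ = ∫⁻ y, ‖f y‖ₑ * μ (K ∆ ((-y + ·) '' K)) ∂μ := by
        refine lintegral_congr fun y => ?_
        rw [lintegral_indicator_const (measurable_prodMk_right hU), hUy, Measure.measure_neg,
          mul_comm]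

end Translates

theorem measure_symmDiff_add_image_ne_top {G : Type*} [AddGroup G] [MeasurableSpace G]
    [MeasurableAdd G] {μ : Measure G} [μ.IsAddLeftInvariant] {B : Set G} (hB : μ B ≠ ⊤) (z : G) :
    μ (B ∆ ((z + ·) '' B)) ≠ ⊤ := by
  refine ne_top_of_le_ne_top ?_
    ((measure_mono Set.symmDiff_subset_union).trans (measure_union_le _ _))
  rw [Set.image_add_left, measure_preimage_add]
  exact ENNReal.add_ne_top.2 ⟨hB, hB⟩

theorem ENNReal.lintegral_rpow_le_of_le {α : Type*} [MeasurableSpace α] {μ : Measure α}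
    {φ : α → ENNReal} {a : ENNReal} (ha : a ≠ ⊤) (hφ : ∀ x, φ x ≤ a) {γ : ℝ} (hγ : 1 ≤ γ) :
    ∫⁻ x, φ x ^ γ ∂μ ≤ a ^ (γ - 1) * ∫⁻ x, φ x ∂μ := by
  rw [← lintegral_const_mul' _ _ (ENNReal.rpow_ne_top_of_nonneg (by linarith) ha)]
  refine lintegral_mono fun x => ?_
  calc φ x ^ γ = φ x ^ (γ - 1) * φ x ^ (1 : ℝ) := by
        rw [← ENNReal.rpow_add_of_nonneg _ _ (by linarith) zero_le_one, sub_add_cancel]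
    _ ≤ a ^ (γ - 1) * φ x := by
        rw [ENNReal.rpow_one]
        gcongr
        exact hφ x

theorem MeasureTheory.eLpNorm_ofReal_rpow_eq_lintegral {α E : Type*} [MeasurableSpace α]
    {μ : Measure α} [NormedAddCommGroup E] {f : α → E} {p : ℝ} (hp : 0 < p) :
    eLpNorm f (ENNReal.ofReal p) μ ^ p = ∫⁻ x, ‖f x‖ₑ ^ p ∂μ := by
  have h := eLpNorm_nnreal_pow_eq_lintegral (f := f) (μ := μ) (p := p.toNNReal)
    (by simpa using hp)
  rwa [Real.coe_toNNReal _ hp.le] at h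

theorem MeasureTheory.Integrable.norm_map_mul_norm {V E : Type*} [NormedAddCommGroup V]
    [NormedSpace ℝ V] [FiniteDimensional ℝ V] [MeasurableSpace V] [OpensMeasurableSpace V]
    [NormedAddCommGroup E] {μ : Measure V} {f : V → E}
    (hmom : Integrable (fun y => ‖y‖ * ‖f y‖) μ) (A : V →ₗ[ℝ] V)
    (hf : AEStronglyMeasurable f μ) : Integrable (fun y => ‖A y‖ * ‖f y‖) μ := by
  let A' := A.toContinuousLinearMap
  refine (hmom.const_mul ‖A'‖).mono' (A'.continuous.norm.aestronglyMeasurable.mul hf.norm)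
    (Filter.Eventually.of_forall fun y => ?_)
  rw [norm_mul, norm_norm, norm_norm, ← mul_assoc]
  exact mul_le_mul_of_nonneg_right (A'.le_opNorm y) (norm_nonneg _)

section Covariogram
variable {V : Type*} [NormedAddCommGroup V] [NormedSpace ℝ V] [FiniteDimensional ℝ V]
  [MeasurableSpace V] [BorelSpace V] {μ : Measure V} [μ.IsAddHaarMeasure]

theorem addHaar_image_symmDiff_add_image (g : V ≃ₗ[ℝ] V) (B : Set V) (z : V) :
    μ ((g '' B) ∆ ((z + ·) '' (g '' B))) =
      ENNReal.ofReal |LinearMap.det (g : V →ₗ[ℝ] V)| * μ (B ∆ ((g.symm z + ·) '' B)) := by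
  have htrans : (z + ·) '' (g '' B) = g '' ((g.symm z + ·) '' B) := by
    simp only [Set.image_image, map_add, LinearEquiv.apply_symm_apply]
  rw [htrans, ← Set.image_symmDiff g.injective]
  exact Measure.addHaar_image_linearMap μ (g : V →ₗ[ℝ] V) _

theorem lintegral_enorm_setIntegral_add_image_rpow_le (M : V ≃ₗ[ℝ] V) {B : Set V}
    (hB : MeasurableSet B) {C : ℝ} (hC0 : 0 ≤ C)
    (hC : ∀ w, μ (B ∆ ((w + ·) '' B)) ≤ ENNReal.ofReal (C * ‖w‖))
    {E : Type*} [NormedAddCommGroup E] [NormedSpace ℝ E] {f : V → E}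
    (hf : Integrable f μ) (hf0 : ∫ y, f y ∂μ = 0)
    (hmom : Integrable (fun y => ‖y‖ * ‖f y‖) μ) {γ : ℝ} (hγ : 1 ≤ γ) :
    ∫⁻ x, ‖∫ y in (x + ·) '' (M '' B), f y ∂μ‖ₑ ^ γ ∂μ ≤
      ENNReal.ofReal (C * (∫ y, ‖f y‖ ∂μ) ^ (γ - 1) *
        ∫ y, |LinearMap.det (M : V →ₗ[ℝ] V)| * ‖M.symm y‖ * ‖f y‖ ∂μ) := by
  set δ := |LinearMap.det (M : V →ₗ[ℝ] V)|
  have hK : MeasurableSet (M '' B) := by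
    rw [M.image_eq_preimage_symm]
    exact (M.symm : V →ₗ[ℝ] V).continuous_of_finiteDimensional.measurable hB
  have hsup : ∀ x, ‖∫ y in (x + ·) '' (M '' B), f y ∂μ‖ₑ ≤ ENNReal.ofReal (∫ y, ‖f y‖ ∂μ) := by
    intro x
    rw [ofReal_integral_norm_eq_lintegral_enorm hf]
    exact (enorm_integral_le_lintegral_enorm _).trans (setLIntegral_le_lintegral _ _)
  have hcov : ∀ y, ‖f y‖ₑ * μ ((M '' B) ∆ ((-y + ·) '' (M '' B))) ≤
      ENNReal.ofReal (C * (δ * ‖M.symm y‖ * ‖f y‖)) := by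
    intro y
    rw [addHaar_image_symmDiff_add_image, map_neg]
    calc ‖f y‖ₑ * (ENNReal.ofReal δ * μ (B ∆ ((-M.symm y + ·) '' B)))
        ≤ ENNReal.ofReal ‖f y‖ * (ENNReal.ofReal δ * ENNReal.ofReal (C * ‖M.symm y‖)) := by
          rw [ofReal_norm]
          gcongr
          simpa using hC (-M.symm y)
      _ = ENNReal.ofReal (C * (δ * ‖M.symm y‖ * ‖f y‖)) := by
          rw [← ENNReal.ofReal_mul (abs_nonneg _), ← ENNReal.ofReal_mul (norm_nonneg _)]
          congr 1
          ring
  have hint : Integrable (fun y => C * (δ * ‖M.symm y‖ * ‖f y‖)) μ := by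
    simpa only [mul_assoc, LinearEquiv.coe_coe] using
      ((hmom.norm_map_mul_norm (M.symm : V →ₗ[ℝ] V) hf.1).const_mul δ).const_mul C
  calc ∫⁻ x, ‖∫ y in (x + ·) '' (M '' B), f y ∂μ‖ₑ ^ γ ∂μ
      ≤ ENNReal.ofReal (∫ y, ‖f y‖ ∂μ) ^ (γ - 1) *
          ∫⁻ x, ‖∫ y in (x + ·) '' (M '' B), f y ∂μ‖ₑ ∂μ :=
        ENNReal.lintegral_rpow_le_of_le ENNReal.ofReal_ne_top hsup hγ
    _ ≤ ENNReal.ofReal (∫ y, ‖f y‖ ∂μ) ^ (γ - 1) *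
          ∫⁻ y, ENNReal.ofReal (C * (δ * ‖M.symm y‖ * ‖f y‖)) ∂μ := by
        gcongr _ * ?_
        exact (lintegral_enorm_setIntegral_add_image_le hf hf0 hK).trans (lintegral_mono hcov)
    _ = _ := by
        rw [← ofReal_integral_eq_lintegral_ofReal hint
            (Filter.Eventually.of_forall fun y => by positivity),
          ENNReal.ofReal_rpow_of_nonneg (integral_nonneg fun _ => norm_nonneg _) (by linarith),
          ← ENNReal.ofReal_mul (by positivity), integral_const_mul]
        congr 1
        ring
end Covariogram

section MatPow
variable {d : ℕ} (E : Matrix (Fin d) (Fin d) ℝ) (r : ℝ)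

theorem matPow_neg : matPow (-E) r = (matPow E r)⁻¹ := by
  rw [matPow, matPow, smul_neg, Matrix.exp_neg]

theorem isUnit_det_matPow : IsUnit (matPow E r).det :=
  (Matrix.isUnit_iff_isUnit_det _).mp (Matrix.isUnit_exp _)

theorem det_matPow {r : ℝ} (hr : 0 < r) : (matPow E r).det = r ^ E.trace := by
  rw [matPow, Matrix.det_exp, Matrix.trace_smul, smul_eq_mul, Real.rpow_def_of_pos hr, mul_comm]

noncomputable def matPowEquiv : EuclideanSpace ℝ (Fin d) ≃ₗ[ℝ] EuclideanSpace ℝ (Fin d) :=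
  LinearEquiv.ofLinearMap (Matrix.toEuclideanLin (matPow E r))
    (Matrix.toEuclideanLin (matPow (-E) r))
    (by rw [← Matrix.toLpLin_mul_same, matPow_neg,
      Matrix.mul_nonsing_inv _ (isUnit_det_matPow E r), Matrix.toLpLin_one])
    (by rw [← Matrix.toLpLin_mul_same, matPow_neg,
      Matrix.nonsing_inv_mul _ (isUnit_det_matPow E r), Matrix.toLpLin_one])

theorem det_matPowEquiv {r : ℝ} (hr : 0 < r) :
    LinearMap.det (matPowEquiv E r : EuclideanSpace ℝ (Fin d) →ₗ[ℝ] _) = r ^ E.trace := by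
  rw [← det_matPow E hr]
  exact LinearMap.det_toLpLin 2 (matPow E r)

theorem ballE_eq_image_matPowEquiv (B : Set (EuclideanSpace ℝ (Fin d)))
    (x : EuclideanSpace ℝ (Fin d)) : ballE E B x r = (x + ·) '' (matPowEquiv E r '' B) := by
  rw [ballE, Set.image_image]
  rfl

end MatPow

theorem TE_meanzero_bound_general {d : ℕ} (E : Matrix (Fin d) (Fin d) ℝ)
    (B : Set (EuclideanSpace ℝ (Fin d))) (hBm : MeasurableSet B)
    (hBfin : volume B < ⊤)
    (L : ℝ)
    (hLip : ∀ z : EuclideanSpace ℝ (Fin d),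
      (volume (symmDiff B ((z + ·) '' B))).toReal ≤ L * ‖z‖) :
    ∃ C : ℝ, 0 < C ∧ ∀ γ ∈ Set.Icc (1 : ℝ) 2,
      ∀ f : EuclideanSpace ℝ (Fin d) → ℝ, Integrable f → (∫ y, f y) = 0 →
      Integrable (fun y => ‖y‖ * |f y|) →
      ∀ r : ℝ, 0 < r →
      (eLpNorm (TE E B r f) (ENNReal.ofReal γ) volume) ^ γ ≤
        ENNReal.ofReal (C * (∫ y, |f y|) ^ (γ - 1) *
          ∫ y, r ^ (Matrix.trace E) *
            ‖Matrix.toEuclideanLin (matPow (-E) r) y‖ * |f y|) := by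
  refine ⟨max L 1, by positivity, ?_⟩
  rintro γ ⟨hγ, -⟩ f hf hf0 hmom r hr
  have hcov : ∀ w, volume (symmDiff B ((w + ·) '' B)) ≤ ENNReal.ofReal (max L 1 * ‖w‖) := by
    intro w
    rw [ENNReal.le_ofReal_iff_toReal_le (measure_symmDiff_add_image_ne_top hBfin.ne w)
      (by positivity)]
    exact (hLip w).trans (by gcongr; exact le_max_left _ _)
  have hbound := lintegral_enorm_setIntegral_add_image_rpow_le (matPowEquiv E r) hBm
    (by positivity) hcov hf hf0 (by simpa only [Real.norm_eq_abs] using hmom) hγ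
  rw [det_matPowEquiv E hr, abs_of_pos (Real.rpow_pos_of_pos hr _)] at hbound
  simp only [Real.norm_eq_abs, ← ballE_eq_image_matPowEquiv] at hbound
  rw [eLpNorm_ofReal_rpow_eq_lintegral (by linarith)]
  exact hbound

/-- If the covariogram of `B` satisfies `Leb(B Δ (z+B)) ≤ L|z|`, then for `γ ∈ [1,2]`
and every mean-zero `f` with finite first moment,
`‖T_r^E f‖_{L^γ}^γ ≤ C ‖f‖_{L¹}^{γ-1} ∫ r^q |r^{-E} y| |f(y)| dy`
where `C` depends only on `B`. -/
theorem TE_meanzero_bound {d : ℕ} (E : Matrix (Fin d) (Fin d) ℝ)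
    (B : Set (EuclideanSpace ℝ (Fin d))) (hBm : MeasurableSet B)
    (hBb : Bornology.IsBounded B) (hB0 : 0 < volume B) (hBfin : volume B < ⊤)
    (L : ℝ)
    (hLip : ∀ z : EuclideanSpace ℝ (Fin d),
      (volume (symmDiff B ((z + ·) '' B))).toReal ≤ L * ‖z‖) :
    ∃ C : ℝ, 0 < C ∧ ∀ γ ∈ Set.Icc (1 : ℝ) 2,
      ∀ f : EuclideanSpace ℝ (Fin d) → ℝ, Integrable f → (∫ y, f y) = 0 →
      Integrable (fun y => ‖y‖ * |f y|) →
      ∀ r : ℝ, 0 < r →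
      (eLpNorm (TE E B r f) (ENNReal.ofReal γ) volume) ^ γ ≤
        ENNReal.ofReal (C * (∫ y, |f y|) ^ (γ - 1) *
          ∫ y, r ^ (Matrix.trace E) *
            ‖Matrix.toEuclideanLin (matPow (-E) r) y‖ * |f y|) :=
  TE_meanzero_bound_general E B hBm hBfin L hLip
end

section
/- Let E be a real d×d matrix whose eigenvalues all have real parts ≥ a_d > 0, and let ℓ_d ≤ d be the dimension of the largest Jordan block with real part a_d. Then there exists C > 0 such that the operator norm of r^E satisfies ‖r^E‖ ≤ C r^{a_d} (|log r| ∨ 1)^{ℓ_d − 1} for all r ∈ (0,1). -/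
/-!
On a generalized eigenvector `x` of `T` for `μ`, the exponential series of `t • T` is the finite
sum `e^{tμ} ∑_{j<k} t^j/j! (T - μ)^j x`, so `‖e^{tT} x‖ ≲ e^{t Re μ} max(|t|,1)^{k-1}` for `t ≤ 0`.
If `Re μ = a`, the Jordan hypothesis gives `k ≤ ℓ`; if `Re μ > a`, the extra factor
`e^{t (Re μ - a)}` absorbs any power of `|t|`. Since generalized eigenvectors span `ℂ^d`, every
orbit is `O(e^{ta} max(|t|,1)^{ℓ-1})`, and Banach–Steinhaus makes this uniform in operator norm.
Taking `t = log r` and passing from `ℝ^d` to `ℂ^d` gives the bound on `r^E`.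
-/

open NormedSpace Finset Nat Module.End

theorem Real.exp_mul_max_abs_one_pow_le {b : ℝ} (hb : 0 < b) (n : ℕ) {t : ℝ} (ht : t ≤ 0) :
    Real.exp (t * b) * max |t| 1 ^ n ≤ n ! / b ^ n + 1 := by
  rcases le_total |t| 1 with h | h
  · have hexp : Real.exp (t * b) ≤ 1 :=
      Real.exp_le_one_iff.mpr (mul_nonpos_of_nonpos_of_nonneg ht hb.le)
    rw [max_eq_right h, one_pow, mul_one]
    linarith [show (0 : ℝ) ≤ n ! / b ^ n by positivity]
  · have hpow : (b * -t) ^ n ≤ Real.exp (b * -t) * n ! := by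
      rw [← div_le_iff₀ (by positivity)]
      exact Real.pow_div_factorial_le_exp _ (mul_nonneg hb.le (neg_nonneg.mpr ht)) n
    have hmul : Real.exp (t * b) * (-t) ^ n * b ^ n ≤ n ! := calc
      _ = Real.exp (t * b) * (b * -t) ^ n := by ring
      _ ≤ Real.exp (t * b) * (Real.exp (b * -t) * n !) := by gcongr
      _ = n ! := by rw [← mul_assoc, ← Real.exp_add]; ring_nf; simp
    rw [max_eq_left h, abs_of_nonpos ht]
    linarith [(le_div_iff₀ (by positivity)).mpr hmul]

theorem exists_opNorm_le_mul_of_forall_exists_norm_apply_le {ι 𝕜 E F : Type*} [RCLike 𝕜]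
    [NormedAddCommGroup E] [CompleteSpace E] [NormedSpace 𝕜 E] [NormedAddCommGroup F]
    [NormedSpace 𝕜 F] {L : ι → E →L[𝕜] F} {g : ι → ℝ} (hg : ∀ i, 0 < g i)
    (h : ∀ x, ∃ C, ∀ i, ‖L i x‖ ≤ C * g i) : ∃ C, ∀ i, ‖L i‖ ≤ C * g i := by
  have hscale (i : ι) (C r : ℝ) : ‖(((g i)⁻¹ : ℝ) : 𝕜)‖ * r ≤ C ↔ r ≤ C * g i := by
    rw [RCLike.norm_ofReal, abs_inv, abs_of_pos (hg i), inv_mul_le_iff₀ (hg i), mul_comm]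
  obtain ⟨C, hC⟩ := banach_steinhaus (g := fun i => (((g i)⁻¹ : ℝ) : 𝕜) • L i) fun x => by
    obtain ⟨C, hC⟩ := h x
    exact ⟨C, fun i => by simpa only [smul_apply, norm_smul, hscale] using hC i⟩
  exact ⟨C, fun i => by simpa only [norm_smul, hscale] using hC i⟩

theorem ContinuousLinearMap.pow_sub_smul_apply_eq_zero_of_mem_genEigenspace {R M : Type*}
    [CommRing R] [TopologicalSpace M] [AddCommGroup M] [Module R M] [IsTopologicalAddGroup M]
    [ContinuousConstSMul R M] (T : M →L[R] M) {μ : R} {k : ℕ} {x : M}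
    (hx : x ∈ genEigenspace (T : M →ₗ[R] M) μ k) :
    ((T - μ • 1) ^ k) x = 0 := by
  have hcoe : (((T - μ • 1) ^ k : M →L[R] M) : M →ₗ[R] M) = ((T : M →ₗ[R] M) - μ • 1) ^ k := by
    simp
  rwa [mem_genEigenspace_nat, LinearMap.mem_ker, ← hcoe] at hx

section ExpOnGenEigenspaces

variable {V : Type*} [NormedAddCommGroup V] [NormedSpace ℂ V] [CompleteSpace V]

theorem exp_smul_apply_of_pow_sub_smul_apply_eq_zero (T : V →L[ℂ] V) {μ : ℂ} {k : ℕ} {x : V}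
    (hx : ((T - μ • 1) ^ k) x = 0) (z : ℂ) :
    exp (z • T) x = Complex.exp (z * μ) • ∑ j ∈ range k, (z ^ j / j !) • ((T - μ • 1) ^ j) x := by
  let : NormedAlgebra ℚ (V →L[ℂ] V) := .restrictScalars ℚ ℂ _
  set N := T - μ • 1
  have hsplit : z • T = algebraMap ℂ _ (z * μ) + z • N := by
    simp only [N, smul_sub, smul_smul, Algebra.algebraMap_eq_smul_one]; abel
  have hN : exp (z • N) x = ∑ j ∈ range k, (z ^ j / j !) • (N ^ j) x := by
    have hsum := (ContinuousLinearMap.apply ℂ V x).hasSum (exp_series_hasSum_exp' (𝕂 := ℂ) (z • N))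
    refine (hsum.unique (hasSum_sum_of_ne_finset_zero fun j hj => ?_)).trans
      (sum_congr rfl fun j _ => ?_)
    · have : N ^ j = N ^ (j - k) * N ^ k := by
        rw [← pow_add]; congr 1; simp only [mem_range, not_lt] at hj; omega
      simp [smul_pow, this, hx]
    · simp [smul_pow, smul_smul, div_eq_inv_mul]
  rw [hsplit, exp_add_of_commute (Algebra.commutes _ _), ← algebraMap_exp_comm,
    Complex.exp_eq_exp_ℂ, Algebra.algebraMap_eq_smul_one, smul_mul_assoc, one_mul,
    smul_apply, hN]

theorem norm_exp_smul_apply_le_of_pow_sub_smul_apply_eq_zero (T : V →L[ℂ] V) {μ : ℂ} {k : ℕ}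
    {x : V} (hx : ((T - μ • 1) ^ k) x = 0) (t : ℝ) :
    ‖exp ((t : ℂ) • T) x‖ ≤
      Real.exp (t * μ.re) * max |t| 1 ^ (k - 1) * ∑ j ∈ range k, ‖((T - μ • 1) ^ j) x‖ := by
  rw [exp_smul_apply_of_pow_sub_smul_apply_eq_zero T hx, norm_smul, Complex.norm_exp, mul_assoc,
    Complex.re_ofReal_mul]
  gcongr
  refine (norm_sum_le _ _).trans ?_
  rw [mul_sum]
  gcongr with j hj
  rw [norm_smul, norm_div, norm_pow, Complex.norm_real, Complex.norm_natCast, Real.norm_eq_abs]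
  gcongr
  calc |t| ^ j / j ! ≤ |t| ^ j := div_le_self (by positivity) (by exact_mod_cast factorial_pos j)
    _ ≤ max |t| 1 ^ j := by gcongr; exact le_max_left _ _
    _ ≤ max |t| 1 ^ (k - 1) :=
      pow_le_pow_right₀ (le_max_right _ _) (by simp only [mem_range] at hj; omega)

theorem exists_norm_exp_smul_apply_le_of_mem_maxGenEigenspace (T : V →L[ℂ] V) {a : ℝ} {ℓ : ℕ}
    {μ : ℂ} (ha : a ≤ μ.re)
    (hℓ : μ.re = a → genEigenspace (T : V →ₗ[ℂ] V) μ ℓ = maxGenEigenspace (T : V →ₗ[ℂ] V) μ)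
    {x : V} (hx : x ∈ maxGenEigenspace (T : V →ₗ[ℂ] V) μ) :
    ∃ C, ∀ t : ℝ, t ≤ 0 →
      ‖exp ((t : ℂ) • T) x‖ ≤ C * (Real.exp (t * a) * max |t| 1 ^ (ℓ - 1)) := by
  rcases ha.eq_or_lt with hre | hlt
  · have hxℓ := T.pow_sub_smul_apply_eq_zero_of_mem_genEigenspace ((hℓ hre.symm).ge hx)
    refine ⟨∑ j ∈ range ℓ, ‖((T - μ • 1) ^ j) x‖, fun t _ => ?_⟩
    have := norm_exp_smul_apply_le_of_pow_sub_smul_apply_eq_zero T hxℓ t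
    rw [← hre] at this
    linarith
  · obtain ⟨k, hk⟩ := mem_genEigenspace_top.mp hx
    have hxk := T.pow_sub_smul_apply_eq_zero_of_mem_genEigenspace (k := k)
      (mem_genEigenspace_nat.mpr hk)
    set S := ∑ j ∈ range k, ‖((T - μ • 1) ^ j) x‖
    refine ⟨((k - ℓ) ! / (μ.re - a) ^ (k - ℓ) + 1) * S, fun t ht => ?_⟩
    set m := max |t| 1
    have hm : m ^ (k - 1) ≤ m ^ (k - ℓ) * m ^ (ℓ - 1) := by
      rw [← pow_add]; exact pow_le_pow_right₀ (le_max_right _ _) (by omega)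
    have hexp : Real.exp (t * μ.re) = Real.exp (t * (μ.re - a)) * Real.exp (t * a) := by
      rw [← Real.exp_add]; ring_nf
    calc ‖exp ((t : ℂ) • T) x‖
        ≤ Real.exp (t * μ.re) * m ^ (k - 1) * S :=
          norm_exp_smul_apply_le_of_pow_sub_smul_apply_eq_zero T hxk t
      _ = Real.exp (t * (μ.re - a)) * Real.exp (t * a) * S * m ^ (k - 1) := by rw [hexp]; ring
      _ ≤ Real.exp (t * (μ.re - a)) * Real.exp (t * a) * S * (m ^ (k - ℓ) * m ^ (ℓ - 1)) := by
          gcongr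
      _ = (Real.exp (t * (μ.re - a)) * m ^ (k - ℓ)) * S * (Real.exp (t * a) * m ^ (ℓ - 1)) := by
          ring
      _ ≤ _ := by
          gcongr ?_ * _ * _
          exact Real.exp_mul_max_abs_one_pow_le (sub_pos.mpr hlt) _ ht

end ExpOnGenEigenspaces

theorem exists_norm_exp_smul_le {V : Type*} [NormedAddCommGroup V] [NormedSpace ℂ V]
    [FiniteDimensional ℂ V] (T : V →L[ℂ] V) {a : ℝ} {ℓ : ℕ}
    (hspec : ∀ μ ∈ spectrum ℂ (T : V →ₗ[ℂ] V), a ≤ μ.re)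
    (hJordan : ∀ μ ∈ spectrum ℂ (T : V →ₗ[ℂ] V), μ.re = a →
      genEigenspace (T : V →ₗ[ℂ] V) μ ℓ = maxGenEigenspace (T : V →ₗ[ℂ] V) μ) :
    ∃ C, 0 < C ∧ ∀ t : ℝ, t ≤ 0 →
      ‖exp ((t : ℂ) • T)‖ ≤ C * Real.exp (t * a) * max |t| 1 ^ (ℓ - 1) := by
  have : CompleteSpace V := FiniteDimensional.complete ℂ V
  let g : Set.Iic (0 : ℝ) → ℝ := fun t => Real.exp (t * a) * max |(t : ℝ)| 1 ^ (ℓ - 1)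
  have hg : ∀ t, 0 < g t := fun t => by positivity
  have hpointwise (x : V) :
      ∃ C, ∀ t : Set.Iic (0 : ℝ), ‖exp (((t : ℝ) : ℂ) • T) x‖ ≤ C * g t := by
    have hx : x ∈ ⨆ μ, maxGenEigenspace (T : V →ₗ[ℂ] V) μ := by
      rw [iSup_maxGenEigenspace_eq_top]; trivial
    induction hx using Submodule.iSup_induction' with
    | mem μ y hy =>
      obtain rfl | hy0 := eq_or_ne y 0
      · exact ⟨0, by simp⟩
      have hμ : μ ∈ spectrum ℂ (T : V →ₗ[ℂ] V) :=
        (HasUnifEigenvalue.lt one_pos ((Submodule.ne_bot_iff _).mpr ⟨y, hy, hy0⟩)).mem_spectrum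
      obtain ⟨C, hC⟩ := exists_norm_exp_smul_apply_le_of_mem_maxGenEigenspace T (hspec μ hμ)
        (hJordan μ hμ) hy
      exact ⟨C, fun t => hC t t.2⟩
    | zero => exact ⟨0, by simp⟩
    | add y z _ _ hy hz =>
      obtain ⟨C₁, h₁⟩ := hy
      obtain ⟨C₂, h₂⟩ := hz
      refine ⟨C₁ + C₂, fun t => ?_⟩
      rw [map_add, add_mul]
      exact (norm_add_le _ _).trans (add_le_add (h₁ t) (h₂ t))
  obtain ⟨C, hC⟩ := exists_opNorm_le_mul_of_forall_exists_norm_apply_le hg hpointwise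
  refine ⟨max C 1, by positivity, fun t ht => ?_⟩
  rw [mul_assoc]
  exact (hC ⟨t, ht⟩).trans (mul_le_mul_of_nonneg_right (le_max_left _ _) (hg _).le)

theorem Module.End.genEigenspace_conjAlgEquiv {R M N : Type*} [CommRing R] [AddCommGroup M]
    [Module R M] [AddCommGroup N] [Module R N] (e : M ≃ₗ[R] N) (f : Module.End R M) (μ : R)
    (k : ℕ∞) :
    genEigenspace (e.conjAlgEquiv R f) μ k = (genEigenspace f μ k).map (e : M →ₗ[R] N) := by
  ext x
  have hpow (l : ℕ) : (e.conjAlgEquiv R f - μ • 1) ^ l = e.conjAlgEquiv R ((f - μ • 1) ^ l) := by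
    simp
  simp only [mem_genEigenspace, Submodule.mem_map_equiv, LinearMap.mem_ker, hpow]
  simp [LinearEquiv.conjAlgEquiv_apply]

section Matrix

variable {n : Type*} [Fintype n] [DecidableEq n]

theorem Matrix.toLpLin_eq_conjAlgEquiv_toLin' {R : Type*} [CommRing R] (p : ENNReal)
    (A : Matrix n n R) :
    Matrix.toLpLin p p A = (WithLp.linearEquiv p R (n → R)).symm.conjAlgEquiv R (Matrix.toLin' A) :=
  rfl

theorem Matrix.opNorm_toEuclideanCLM_le_map_ofReal (M : Matrix n n ℝ) :
    ‖(Matrix.toEuclideanCLM (𝕜 := ℝ) M : EuclideanSpace ℝ n →L[ℝ] EuclideanSpace ℝ n)‖ ≤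
      ‖(Matrix.toEuclideanCLM (𝕜 := ℂ) (M.map Complex.ofReal) :
        EuclideanSpace ℂ n →L[ℂ] EuclideanSpace ℂ n)‖ := by
  refine ContinuousLinearMap.opNorm_le_bound _ (norm_nonneg _) fun x => ?_
  let xc : EuclideanSpace ℂ n := WithLp.toLp 2 fun i => (x i : ℂ)
  have hnorm (y : EuclideanSpace ℝ n) :
      ‖(WithLp.toLp 2 fun i => (y i : ℂ) : EuclideanSpace ℂ n)‖ = ‖y‖ := by
    simp [EuclideanSpace.norm_eq]
  have happ : Matrix.toEuclideanCLM (𝕜 := ℂ) (M.map Complex.ofReal) xc =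
      WithLp.toLp 2 fun i => ((Matrix.toEuclideanCLM (𝕜 := ℝ) M x i : ℝ) : ℂ) := by
    ext i
    simp [xc, Matrix.mulVec, dotProduct]
  rw [← hnorm, ← hnorm x, ← happ]
  exact ContinuousLinearMap.le_opNorm _ _

theorem Matrix.toEuclideanCLM_map_ofReal_exp (M : Matrix n n ℝ) :
    Matrix.toEuclideanCLM (𝕜 := ℂ) ((exp M).map Complex.ofReal) =
      exp (Matrix.toEuclideanCLM (𝕜 := ℂ) (M.map Complex.ofReal)) := by
  -- `map_exp` wants a Banach-algebra norm on the domain; any one will do, as `exp` only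
  -- depends on the topology.
  open scoped Matrix.Norms.L2Operator in
  let : NormedAlgebra ℚ (Matrix n n ℝ) := .restrictScalars ℚ ℝ _
  let complexify : Matrix n n ℝ →+* (EuclideanSpace ℂ n →L[ℂ] EuclideanSpace ℂ n) :=
    (Matrix.toEuclideanCLM (𝕜 := ℂ) (n := n) : Matrix n n ℂ →+* _).comp
      Complex.ofRealHom.mapMatrix
  have hcomplexify : Continuous complexify :=
    (Matrix.toEuclideanCLM (𝕜 := ℂ) (n := n)).toAlgEquiv.toLinearMap.continuous_of_finiteDimensional
      |>.comp (continuous_id.matrix_map Complex.continuous_ofReal)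
  exact map_exp complexify hcomplexify M

end Matrix

theorem opNorm_matPow_small_r_general {d : ℕ} (E : Matrix (Fin d) (Fin d) ℝ)
    (a : ℝ)
    (hE : ∀ μ ∈ spectrum ℂ (E.map (Complex.ofReal)), a ≤ μ.re)
    (ℓ : ℕ)
    (hJordan : ∀ μ ∈ spectrum ℂ (E.map (Complex.ofReal)), μ.re = a →
      Module.End.genEigenspace (Matrix.toLin' (E.map (Complex.ofReal))) μ (ℓ : ℕ∞) =
        Module.End.maxGenEigenspace (Matrix.toLin' (E.map (Complex.ofReal))) μ) :
    ∃ C : ℝ, 0 < C ∧ ∀ r ∈ Set.Ioo (0 : ℝ) 1,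
      ‖(Matrix.toEuclideanCLM (𝕜 := ℝ) (matPow E r) :
          EuclideanSpace ℝ (Fin d) →L[ℝ] EuclideanSpace ℝ (Fin d))‖ ≤
        C * r ^ a * (max |Real.log r| 1) ^ (ℓ - 1) := by
  set A := E.map Complex.ofReal
  set T : EuclideanSpace ℂ (Fin d) →L[ℂ] EuclideanSpace ℂ (Fin d) :=
    Matrix.toEuclideanCLM (𝕜 := ℂ) A
  have hT : (T : EuclideanSpace ℂ (Fin d) →ₗ[ℂ] EuclideanSpace ℂ (Fin d)) =
      (WithLp.linearEquiv 2 ℂ (Fin d → ℂ)).symm.conjAlgEquiv ℂ (Matrix.toLin' A) :=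
    Matrix.toLpLin_eq_conjAlgEquiv_toLin' 2 A
  have hspec : spectrum ℂ (T : EuclideanSpace ℂ (Fin d) →ₗ[ℂ] EuclideanSpace ℂ (Fin d)) =
      spectrum ℂ A :=
    Matrix.spectrum_toLpLin 2
  obtain ⟨C, hC, hbound⟩ := exists_norm_exp_smul_le T (a := a) (ℓ := ℓ)
    (fun μ hμ => hE μ (hspec ▸ hμ))
    (fun μ hμ hre => by
      rw [hT, genEigenspace_conjAlgEquiv, maxGenEigenspace, genEigenspace_conjAlgEquiv,
        hJordan μ (hspec ▸ hμ) hre])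
  refine ⟨C, hC, fun r ⟨hr0, hr1⟩ => ?_⟩
  have hexp : Matrix.toEuclideanCLM (𝕜 := ℂ) ((matPow E r).map Complex.ofReal) =
      exp ((Real.log r : ℂ) • T) := by
    rw [matPow, Matrix.toEuclideanCLM_map_ofReal_exp, Matrix.map_smul' _ _ _ Complex.ofReal_mul,
      map_smul]
  calc _ ≤ ‖Matrix.toEuclideanCLM (𝕜 := ℂ) ((matPow E r).map Complex.ofReal)‖ :=
        Matrix.opNorm_toEuclideanCLM_le_map_ofReal _
    _ = ‖exp ((Real.log r : ℂ) • T)‖ := by rw [hexp]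
    _ ≤ C * Real.exp (Real.log r * a) * max |Real.log r| 1 ^ (ℓ - 1) :=
        hbound _ (Real.log_nonpos hr0.le hr1.le)
    _ = C * r ^ a * max |Real.log r| 1 ^ (ℓ - 1) := by rw [Real.rpow_def_of_pos hr0]

/-- If all eigenvalues of `E` have real part `≥ a_d > 0`, and every Jordan block of an
eigenvalue with real part `a_d` has size at most `ℓ` (generalized eigenspaces stabilize
at exponent `ℓ`), then `‖r^E‖ ≤ C r^{a_d} (|log r| ∨ 1)^{ℓ-1}` for `r ∈ (0,1)`. -/
theorem opNorm_matPow_small_r {d : ℕ} (E : Matrix (Fin d) (Fin d) ℝ)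
    (a : ℝ) (ha : 0 < a)
    (hE : ∀ μ ∈ spectrum ℂ (E.map (Complex.ofReal)), a ≤ μ.re)
    (ℓ : ℕ) (hℓ1 : 1 ≤ ℓ) (hℓd : ℓ ≤ d)
    (hJordan : ∀ μ ∈ spectrum ℂ (E.map (Complex.ofReal)), μ.re = a →
      Module.End.genEigenspace (Matrix.toLin' (E.map (Complex.ofReal))) μ (ℓ : ℕ∞) =
        Module.End.maxGenEigenspace (Matrix.toLin' (E.map (Complex.ofReal))) μ) :
    ∃ C : ℝ, 0 < C ∧ ∀ r ∈ Set.Ioo (0 : ℝ) 1,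
      ‖(Matrix.toEuclideanCLM (𝕜 := ℝ) (matPow E r) :
          EuclideanSpace ℝ (Fin d) →L[ℝ] EuclideanSpace ℝ (Fin d))‖ ≤
        C * r ^ a * (max |Real.log r| 1) ^ (ℓ - 1) :=
  opNorm_matPow_small_r_general E a hE ℓ hJordan
end

section
/- Let β > 0 and let g, g_ρ: (0,∞) → ℂ be continuous functions with |g(r)| ≤ C(r^{β_−} ∧ r^{β_+}) and |g_ρ(r)| ≤ C(r^{β_−} ∧ r^{β_+}) for some 0 < β_− < β < β_+ and all r, ρ > 0, and suppose g_ρ(r) → g(r) pointwise as ρ → 0. If F(dr) = p(r) dr with p(r) ~ C_β r^{−1−β} as r → ∞ (in the sense p(r) r^{1+β} → C_β), then ρ^{−β} ∫_0^∞ g_ρ(r) F(dr/ρ) → C_β ∫_0^∞ g(r) r^{−1−β} dr as ρ → 0. -/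
open MeasureTheory Filter

private lemma aux_min_rpow_int {βm βp β : ℝ} (h1 : βm < β) (h2 : β < βp) :
    IntegrableOn (fun r : ℝ => min (r ^ βm) (r ^ βp) * r ^ (-1 - β)) (Set.Ioi 0) volume := by
  have hmeas : Measurable (fun r : ℝ => min (r ^ βm) (r ^ βp) * r ^ (-1 - β)) := by fun_prop
  rw [← Set.Ioc_union_Ioi_eq_Ioi (zero_le_one (α := ℝ)), integrableOn_union]
  constructor
  · refine Integrable.mono' (g := fun r => r ^ (βp - 1 - β))
      ((intervalIntegral.intervalIntegrable_rpow' (by linarith)).1)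
      hmeas.aestronglyMeasurable ?_
    filter_upwards [ae_restrict_mem measurableSet_Ioc] with r hr
    have hr0 : (0:ℝ) < r := hr.1
    have hmin : (0:ℝ) ≤ min (r ^ βm) (r ^ βp) :=
      le_min (Real.rpow_nonneg hr0.le _) (Real.rpow_nonneg hr0.le _)
    have he : (0:ℝ) ≤ r ^ (-1 - β) := Real.rpow_nonneg hr0.le _
    rw [Real.norm_eq_abs, abs_of_nonneg (mul_nonneg hmin he)]
    calc min (r ^ βm) (r ^ βp) * r ^ (-1 - β) ≤ r ^ βp * r ^ (-1 - β) :=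
          mul_le_mul_of_nonneg_right (min_le_right _ _) he
      _ = r ^ (βp - 1 - β) := by rw [← Real.rpow_add hr0]; congr 1; ring
  · refine Integrable.mono' (g := fun r => r ^ (βm - 1 - β))
      (integrableOn_Ioi_rpow_of_lt (by linarith) one_pos)
      hmeas.aestronglyMeasurable ?_
    filter_upwards [ae_restrict_mem measurableSet_Ioi] with r hr
    have hr0 : (0:ℝ) < r := lt_trans one_pos hr
    have hmin : (0:ℝ) ≤ min (r ^ βm) (r ^ βp) :=
      le_min (Real.rpow_nonneg hr0.le _) (Real.rpow_nonneg hr0.le _)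
    have he : (0:ℝ) ≤ r ^ (-1 - β) := Real.rpow_nonneg hr0.le _
    rw [Real.norm_eq_abs, abs_of_nonneg (mul_nonneg hmin he)]
    calc min (r ^ βm) (r ^ βp) * r ^ (-1 - β) ≤ r ^ βm * r ^ (-1 - β) :=
          mul_le_mul_of_nonneg_right (min_le_left _ _) he
      _ = r ^ (βm - 1 - β) := by rw [← Real.rpow_add hr0]; congr 1; ring

/-- Zoom-out case of the regular-variation lemma: if `g_ρ → g` pointwise with uniform
bounds `C(r^{β₋} ∧ r^{β₊})`, `0 < β₋ < β < β₊`, and the density `p` of `F` satisfies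
`p(r) r^{1+β} → C_β` at infinity, then
`ρ^{-β} ∫ g_ρ(ρ s) p(s) ds → C_β ∫ g(r) r^{-1-β} dr` as `ρ → 0⁺`. -/
theorem regular_variation_limit
    (β βm βp C Cβ : ℝ) (hβm : 0 < βm) (hmβ : βm < β) (hββp : β < βp) (hC : 0 < C)
    (g : ℝ → ℂ) (G : ℝ → ℝ → ℂ)
    (hg_cont : ContinuousOn g (Set.Ioi 0))
    (hG_cont : ∀ ρ > (0 : ℝ), ContinuousOn (G ρ) (Set.Ioi 0))
    (hg_bd : ∀ r > (0 : ℝ), ‖g r‖ ≤ C * min (r ^ βm) (r ^ βp))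
    (hG_bd : ∀ ρ > (0 : ℝ), ∀ r > (0 : ℝ), ‖G ρ r‖ ≤ C * min (r ^ βm) (r ^ βp))
    (hconv : ∀ r > (0 : ℝ),
      Tendsto (fun ρ => G ρ r) (nhdsWithin 0 (Set.Ioi 0)) (nhds (g r)))
    (p : ℝ → ℝ) (hp_meas : Measurable p) (hp_nonneg : ∀ r > (0 : ℝ), 0 ≤ p r)
    (hp_int : IntegrableOn p (Set.Ioi 0) volume)
    (hp_tail : Tendsto (fun r => p r * r ^ (1 + β)) atTop (nhds Cβ)) :
    Tendsto
      (fun ρ : ℝ => (ρ ^ (-β) : ℝ) • ∫ s in Set.Ioi (0 : ℝ), G ρ (ρ * s) * (p s : ℂ))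
      (nhdsWithin 0 (Set.Ioi 0))
      (nhds (Cβ • ∫ r in Set.Ioi (0 : ℝ), g r * ((r ^ (-1 - β) : ℝ) : ℂ))) := by
  -- tail bound: get `M` and `T ≥ 1` with `p t ≤ M t^{-1-β}` for `t ≥ T`
  set M : ℝ := |Cβ| + 1 with hMdef
  have hM0 : 0 < M := by positivity
  have hCβM : Cβ < M := lt_of_le_of_lt (le_abs_self Cβ) (lt_add_one _)
  obtain ⟨T0, hT0⟩ := eventually_atTop.mp (hp_tail.eventually_lt_const hCβM)
  set T : ℝ := max T0 1 with hTdef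
  have hT1 : (1:ℝ) ≤ T := le_max_right _ _
  have hTpos : (0:ℝ) < T := lt_of_lt_of_le one_pos hT1
  have hTne : T ≠ 0 := ne_of_gt hTpos
  have hpT : ∀ t : ℝ, T ≤ t → p t ≤ M * t ^ (-1 - β) := by
    intro t ht
    have htpos : (0:ℝ) < t := lt_of_lt_of_le hTpos ht
    have h2 : (0:ℝ) < t ^ (1 + β) := Real.rpow_pos_of_pos htpos _
    have h1 : p t * t ^ (1 + β) < M := hT0 t (le_trans (le_max_left _ _) ht)
    have he : t ^ (-1 - β) = (t ^ (1 + β))⁻¹ := by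
      rw [show (-1 - β) = -(1 + β) by ring, Real.rpow_neg htpos.le]
    rw [he, ← div_eq_mul_inv, le_div_iff₀ h2]
    exact h1.le
  -- the dominating function
  have hbound_int :
      Integrable (fun r : ℝ => (C * M) * (min (r ^ βm) (r ^ βp) * r ^ (-1 - β)))
        (volume.restrict (Set.Ioi 0)) :=
    (aux_min_rpow_int hmβ hββp).const_mul _
  -- measurability of the rescaled integrand
  have hh_meas : ∀ ρ : ℝ, 0 < ρ →
      AEStronglyMeasurable (fun r : ℝ => G ρ r * ((p (r / ρ) * ρ ^ (-1 - β) : ℝ) : ℂ))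
        (volume.restrict (Set.Ioi 0)) := by
    intro ρ hρ
    refine (((hG_cont ρ hρ).aestronglyMeasurable measurableSet_Ioi)).mul ?_
    exact (Complex.measurable_ofReal.comp
      ((hp_meas.comp (measurable_id.div_const ρ)).mul_const _)).aestronglyMeasurable
  have hGs_meas : ∀ ρ : ℝ, 0 < ρ →
      AEStronglyMeasurable (fun s : ℝ => G ρ (ρ * s) * (p s : ℂ))
        (volume.restrict (Set.Ioi 0)) := by
    intro ρ hρ
    refine (ContinuousOn.aestronglyMeasurable ?_ measurableSet_Ioi).mul
      (Complex.measurable_ofReal.comp hp_meas).aestronglyMeasurable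
    exact (hG_cont ρ hρ).comp (continuous_const.mul continuous_id).continuousOn
      (fun s hs => mul_pos hρ hs)
  -- a.e. bound on the compact part
  have haeb : ∀ ρ : ℝ, 0 < ρ →
      ∀ᵐ s ∂(volume.restrict (Set.Ioc (0:ℝ) T)),
        ‖G ρ (ρ * s) * (p s : ℂ)‖ ≤ (C * (ρ * T) ^ βp) * p s := by
    intro ρ hρ
    filter_upwards [ae_restrict_mem measurableSet_Ioc] with s hs
    have hs0 : 0 < s := hs.1
    have hρs : 0 < ρ * s := mul_pos hρ hs0
    have h1 : ‖G ρ (ρ * s)‖ ≤ C * (ρ * T) ^ βp := by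
      refine le_trans (hG_bd ρ hρ (ρ * s) hρs) (mul_le_mul_of_nonneg_left ?_ hC.le)
      refine le_trans (min_le_right _ _) ?_
      exact Real.rpow_le_rpow hρs.le (mul_le_mul_of_nonneg_left hs.2 hρ.le) (by linarith)
    rw [norm_mul, Complex.norm_real, Real.norm_eq_abs, abs_of_nonneg (hp_nonneg s hs0)]
    exact mul_le_mul_of_nonneg_right h1 (hp_nonneg s hs0)
  have hpIoc : IntegrableOn p (Set.Ioc (0:ℝ) T) volume :=
    hp_int.mono_set Set.Ioc_subset_Ioi_self
  -- split identity, valid for every ρ > 0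
  have hsplit : ∀ ρ : ℝ, 0 < ρ →
      (ρ ^ (-β) : ℝ) • ∫ s in Set.Ioi (0:ℝ), G ρ (ρ * s) * (p s : ℂ) =
      (ρ ^ (-β) : ℝ) • (∫ s in Set.Ioc (0:ℝ) T, G ρ (ρ * s) * (p s : ℂ)) +
      ∫ r in Set.Ioi (0:ℝ),
        (Set.Ioi (ρ * T)).indicator
          (fun r => G ρ r * ((p (r / ρ) * ρ ^ (-1 - β) : ℝ) : ℂ)) r := by
    intro ρ hρ
    have hint1 : IntegrableOn (fun s : ℝ => G ρ (ρ * s) * (p s : ℂ)) (Set.Ioc 0 T) := by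
      refine Integrable.mono' (g := fun s => (C * (ρ * T) ^ βp) * p s)
        (hpIoc.const_mul _)
        ((hGs_meas ρ hρ).mono_measure
          (Measure.restrict_mono Set.Ioc_subset_Ioi_self le_rfl))
        (haeb ρ hρ)
    have hint2 : IntegrableOn (fun s : ℝ => G ρ (ρ * s) * (p s : ℂ)) (Set.Ioi T) := by
      refine Integrable.mono' (g := fun s => (C * ρ ^ βm * M) * s ^ (βm + (-1 - β)))
        ((integrableOn_Ioi_rpow_of_lt (by linarith) hTpos).const_mul _)
        ((hGs_meas ρ hρ).mono_measure
          (Measure.restrict_mono (Set.Ioi_subset_Ioi hTpos.le) le_rfl)) ?_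
      filter_upwards [ae_restrict_mem measurableSet_Ioi] with s hs
      have hsT : T < s := hs
      have hs0 : 0 < s := lt_trans hTpos hsT
      have hρs : 0 < ρ * s := mul_pos hρ hs0
      have h1 : ‖G ρ (ρ * s)‖ ≤ C * (ρ ^ βm * s ^ βm) := by
        refine le_trans (hG_bd ρ hρ (ρ * s) hρs) (mul_le_mul_of_nonneg_left ?_ hC.le)
        exact le_trans (min_le_left _ _) (le_of_eq (Real.mul_rpow hρ.le hs0.le))
      have h2 : p s ≤ M * s ^ (-1 - β) := hpT s hsT.le
      rw [norm_mul, Complex.norm_real, Real.norm_eq_abs, abs_of_nonneg (hp_nonneg s hs0)]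
      calc ‖G ρ (ρ * s)‖ * p s ≤ (C * (ρ ^ βm * s ^ βm)) * (M * s ^ (-1 - β)) :=
            mul_le_mul h1 h2 (hp_nonneg s hs0) (le_trans (norm_nonneg _) h1)
        _ = (C * ρ ^ βm * M) * (s ^ βm * s ^ (-1 - β)) := by ring
        _ = (C * ρ ^ βm * M) * s ^ (βm + (-1 - β)) := by rw [← Real.rpow_add hs0]
    have hsplitI : ∫ s in Set.Ioi (0:ℝ), G ρ (ρ * s) * (p s : ℂ) =
        (∫ s in Set.Ioc (0:ℝ) T, G ρ (ρ * s) * (p s : ℂ)) +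
        ∫ s in Set.Ioi T, G ρ (ρ * s) * (p s : ℂ) := by
      rw [← Set.Ioc_union_Ioi_eq_Ioi hTpos.le]
      exact setIntegral_union (Set.Ioc_disjoint_Ioi le_rfl) measurableSet_Ioi hint1 hint2
    have hcv : ∫ s in Set.Ioi T, G ρ (ρ * s) * (p s : ℂ) =
        ρ⁻¹ • ∫ r in Set.Ioi (ρ * T), G ρ r * ((p (r / ρ) : ℝ) : ℂ) := by
      rw [← MeasureTheory.integral_comp_mul_left_Ioi
        (fun r => G ρ r * ((p (r / ρ) : ℝ) : ℂ)) T hρ]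
      refine setIntegral_congr_fun measurableSet_Ioi fun s _ => ?_
      rw [mul_comm ρ s, mul_div_assoc, div_self (ne_of_gt hρ), mul_one]
    have hsmul : (ρ ^ (-β) : ℝ) •
        (ρ⁻¹ • ∫ r in Set.Ioi (ρ * T), G ρ r * ((p (r / ρ) : ℝ) : ℂ)) =
        ∫ r in Set.Ioi (0:ℝ),
          (Set.Ioi (ρ * T)).indicator
            (fun r => G ρ r * ((p (r / ρ) * ρ ^ (-1 - β) : ℝ) : ℂ)) r := by
      rw [setIntegral_indicator measurableSet_Ioi, Set.Ioi_inter_Ioi,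
        sup_eq_right.mpr (mul_nonneg hρ.le hTpos.le)]
      rw [smul_smul]
      have hexp : ρ ^ (-β) * ρ⁻¹ = ρ ^ (-1 - β) := by
        rw [← Real.rpow_neg_one ρ, ← Real.rpow_add hρ]; congr 1; ring
      rw [hexp, ← integral_smul]
      refine setIntegral_congr_fun measurableSet_Ioi fun r _ => ?_
      rw [Complex.real_smul]
      push_cast
      ring
    rw [hsplitI, smul_add, hcv, hsmul]
  -- the compact part tends to zero
  have hB : Tendsto
      (fun ρ : ℝ => (ρ ^ (-β) : ℝ) • ∫ s in Set.Ioc (0:ℝ) T, G ρ (ρ * s) * (p s : ℂ))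
      (nhdsWithin 0 (Set.Ioi 0)) (nhds 0) := by
    refine squeeze_zero_norm'
      (a := fun ρ => (C * T ^ βp * ∫ s in Set.Ioc (0:ℝ) T, p s) * ρ ^ (βp - β)) ?_ ?_
    · filter_upwards [self_mem_nhdsWithin] with ρ hρ
      have hρ0 : (0:ℝ) < ρ := hρ
      have hint1 : IntegrableOn (fun s : ℝ => (C * (ρ * T) ^ βp) * p s) (Set.Ioc 0 T) :=
        hpIoc.const_mul _
      have hle1 : ‖∫ s in Set.Ioc (0:ℝ) T, G ρ (ρ * s) * (p s : ℂ)‖ ≤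
          (C * (ρ * T) ^ βp) * ∫ s in Set.Ioc (0:ℝ) T, p s := by
        calc ‖∫ s in Set.Ioc (0:ℝ) T, G ρ (ρ * s) * (p s : ℂ)‖
            ≤ ∫ s in Set.Ioc (0:ℝ) T, (C * (ρ * T) ^ βp) * p s :=
              norm_integral_le_of_norm_le hint1 (haeb ρ hρ0)
          _ = (C * (ρ * T) ^ βp) * ∫ s in Set.Ioc (0:ℝ) T, p s := integral_const_mul _ _
      rw [norm_smul, Real.norm_eq_abs, abs_of_nonneg (Real.rpow_pos_of_pos hρ0 _).le]
      calc ρ ^ (-β) * ‖∫ s in Set.Ioc (0:ℝ) T, G ρ (ρ * s) * (p s : ℂ)‖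
          ≤ ρ ^ (-β) * ((C * (ρ * T) ^ βp) * ∫ s in Set.Ioc (0:ℝ) T, p s) :=
            mul_le_mul_of_nonneg_left hle1 (Real.rpow_pos_of_pos hρ0 _).le
        _ = (C * T ^ βp * ∫ s in Set.Ioc (0:ℝ) T, p s) * (ρ ^ (-β) * ρ ^ βp) := by
            rw [Real.mul_rpow hρ0.le hTpos.le]; ring
        _ = (C * T ^ βp * ∫ s in Set.Ioc (0:ℝ) T, p s) * ρ ^ (βp - β) := by
            rw [← Real.rpow_add hρ0]; congr 1; ring
    · have h0 : Tendsto (fun ρ : ℝ => ρ ^ (βp - β)) (nhds 0) (nhds ((0:ℝ) ^ (βp - β))) :=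
        (Real.continuousAt_rpow_const 0 _ (Or.inr (by linarith))).tendsto
      rw [Real.zero_rpow (ne_of_gt (by linarith : (0:ℝ) < βp - β))] at h0
      have h1 : Tendsto (fun ρ : ℝ => ρ ^ (βp - β)) (nhdsWithin (0:ℝ) (Set.Ioi 0)) (nhds 0) :=
        h0.mono_left nhdsWithin_le_nhds
      simpa using h1.const_mul (C * T ^ βp * ∫ s in Set.Ioc (0:ℝ) T, p s)
  -- the tail part: dominated convergence
  have hC2 : Tendsto
      (fun ρ : ℝ => ∫ r in Set.Ioi (0:ℝ),
        (Set.Ioi (ρ * T)).indicator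
          (fun r => G ρ r * ((p (r / ρ) * ρ ^ (-1 - β) : ℝ) : ℂ)) r)
      (nhdsWithin 0 (Set.Ioi 0))
      (nhds (∫ r in Set.Ioi (0:ℝ), g r * ((Cβ * r ^ (-1 - β) : ℝ) : ℂ))) := by
    refine tendsto_integral_filter_of_dominated_convergence
      (bound := fun r => (C * M) * (min (r ^ βm) (r ^ βp) * r ^ (-1 - β))) ?_ ?_ hbound_int ?_
    · filter_upwards [self_mem_nhdsWithin] with ρ hρ
      exact (hh_meas ρ hρ).indicator measurableSet_Ioi
    · filter_upwards [self_mem_nhdsWithin] with ρ hρ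
      have hρ0 : (0:ℝ) < ρ := hρ
      filter_upwards [ae_restrict_mem measurableSet_Ioi] with r hr
      have hr0 : (0:ℝ) < r := hr
      have hminn : (0:ℝ) ≤ min (r ^ βm) (r ^ βp) :=
        le_min (Real.rpow_nonneg hr0.le _) (Real.rpow_nonneg hr0.le _)
      by_cases hmem : r ∈ Set.Ioi (ρ * T)
      · rw [Set.indicator_of_mem hmem]
        have hrt : T ≤ r / ρ := by
          rw [le_div_iff₀ hρ0]
          calc T * ρ = ρ * T := mul_comm _ _
            _ ≤ r := le_of_lt hmem
        have hrρpos : 0 < r / ρ := lt_of_lt_of_le hTpos hrt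
        have hppos : 0 ≤ p (r / ρ) := hp_nonneg _ hrρpos
        have hρe : (0:ℝ) < ρ ^ (-1 - β) := Real.rpow_pos_of_pos hρ0 _
        have key : p (r / ρ) * ρ ^ (-1 - β) ≤ M * r ^ (-1 - β) := by
          have h1 : p (r / ρ) ≤ M * (r / ρ) ^ (-1 - β) := hpT _ hrt
          have h2 : (r / ρ) ^ (-1 - β) * ρ ^ (-1 - β) = r ^ (-1 - β) := by
            rw [div_eq_mul_inv, Real.mul_rpow hr0.le (inv_nonneg.mpr hρ0.le),
              Real.inv_rpow hρ0.le, mul_assoc,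
              inv_mul_cancel₀ (ne_of_gt (Real.rpow_pos_of_pos hρ0 _)), mul_one]
          calc p (r / ρ) * ρ ^ (-1 - β) ≤ (M * (r / ρ) ^ (-1 - β)) * ρ ^ (-1 - β) :=
                mul_le_mul_of_nonneg_right h1 hρe.le
            _ = M * r ^ (-1 - β) := by rw [mul_assoc, h2]
        have hGb := hG_bd ρ hρ0 r hr0
        rw [norm_mul, Complex.norm_real, Real.norm_eq_abs,
          abs_of_nonneg (mul_nonneg hppos hρe.le)]
        calc ‖G ρ r‖ * (p (r / ρ) * ρ ^ (-1 - β))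
            ≤ (C * min (r ^ βm) (r ^ βp)) * (M * r ^ (-1 - β)) :=
              mul_le_mul hGb key (mul_nonneg hppos hρe.le)
                (le_trans (norm_nonneg _) hGb)
          _ = (C * M) * (min (r ^ βm) (r ^ βp) * r ^ (-1 - β)) := by ring
      · rw [Set.indicator_of_notMem hmem, norm_zero]
        exact mul_nonneg (by positivity)
          (mul_nonneg hminn (Real.rpow_nonneg hr0.le _))
    · filter_upwards [ae_restrict_mem measurableSet_Ioi] with r hr
      have hr0 : (0:ℝ) < r := hr
      have hmemIoo : Set.Ioo (0:ℝ) (r / T) ∈ nhdsWithin (0:ℝ) (Set.Ioi 0) :=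
        Ioo_mem_nhdsGT_of_mem ⟨le_refl 0, div_pos hr0 hTpos⟩
      have heq : (fun ρ : ℝ => G ρ r * ((p (r / ρ) * ρ ^ (-1 - β) : ℝ) : ℂ)) =ᶠ[nhdsWithin (0:ℝ) (Set.Ioi 0)]
          (fun ρ : ℝ => (Set.Ioi (ρ * T)).indicator
            (fun r' => G ρ r' * ((p (r' / ρ) * ρ ^ (-1 - β) : ℝ) : ℂ)) r) := by
        filter_upwards [hmemIoo] with ρ hρ
        have hmem : r ∈ Set.Ioi (ρ * T) := by
          rw [Set.mem_Ioi]
          calc ρ * T < (r / T) * T := mul_lt_mul_of_pos_right hρ.2 hTpos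
            _ = r := div_mul_cancel₀ r hTne
        rw [Set.indicator_of_mem hmem]
      refine Tendsto.congr' heq ?_
      have hreal : Tendsto (fun ρ : ℝ => p (r / ρ) * ρ ^ (-1 - β))
          (nhdsWithin 0 (Set.Ioi 0)) (nhds (Cβ * r ^ (-1 - β))) := by
        have hdiv : Tendsto (fun ρ : ℝ => r / ρ) (nhdsWithin 0 (Set.Ioi 0)) atTop := by
          refine (tendsto_inv_nhdsGT_zero.const_mul_atTop hr0).congr fun ρ => ?_
          rw [div_eq_mul_inv]
        have comp := (hp_tail.comp hdiv).mul_const (r ^ (-1 - β))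
        refine Tendsto.congr' ?_ comp
        filter_upwards [self_mem_nhdsWithin] with ρ hρ
        have hρ0 : (0:ℝ) < ρ := hρ
        have h2 : (r / ρ) ^ (1 + β) * r ^ (-1 - β) = ρ ^ (-1 - β) := by
          rw [div_eq_mul_inv, Real.mul_rpow hr0.le (inv_nonneg.mpr hρ0.le),
            Real.inv_rpow hρ0.le]
          have hr1 : r ^ (1 + β) * r ^ (-1 - β) = 1 := by
            rw [← Real.rpow_add hr0]
            norm_num
          have hρ1 : (ρ ^ (1 + β))⁻¹ = ρ ^ (-1 - β) := by
            rw [← Real.rpow_neg hρ0.le]; congr 1; ring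
          calc r ^ (1 + β) * (ρ ^ (1 + β))⁻¹ * r ^ (-1 - β)
              = (r ^ (1 + β) * r ^ (-1 - β)) * (ρ ^ (1 + β))⁻¹ := by ring
            _ = ρ ^ (-1 - β) := by rw [hr1, one_mul, hρ1]
        show (fun t => p t * t ^ (1 + β)) (r / ρ) * r ^ (-1 - β) = p (r / ρ) * ρ ^ (-1 - β)
        simp only
        rw [mul_assoc, h2]
      exact (hconv r hr0).mul ((Complex.continuous_ofReal.tendsto _).comp hreal)
  -- assemble
  have htarget : Cβ • (∫ r in Set.Ioi (0:ℝ), g r * ((r ^ (-1 - β) : ℝ) : ℂ)) =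
      ∫ r in Set.Ioi (0:ℝ), g r * ((Cβ * r ^ (-1 - β) : ℝ) : ℂ) := by
    rw [← integral_smul]
    refine setIntegral_congr_fun measurableSet_Ioi fun r _ => ?_
    rw [Complex.real_smul]
    push_cast
    ring
  have hfinal := hB.add hC2
  rw [zero_add] at hfinal
  rw [htarget]
  refine Tendsto.congr' ?_ hfinal
  filter_upwards [self_mem_nhdsWithin] with ρ hρ
  exact (hsplit ρ hρ).symm
end
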